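/- Let G = (V, E) be a graph constructed from a d-Hitting Set instance (U, 𝒜) where every set in 𝒜 has size exactly d, as follows: V = U ∪ {v_A, u_A : A ∈ 𝒜}, U forms a clique, and each of v_A, u_A is adjacent exactly to the elements of A. Then for c = d: a set S ⊆ U is a hitting set for 𝒜 if and only if G - S is c-closed, where additionally G - S is c-closed implies that for every A ∈ 𝒜, S ∩ ({v_A, u_A} ∪ A) ≠ ∅. In particular, if H ⊆ U hits every set of 𝒜, then G - H is d-closed. -/

import Mathlib

/-
Each vertex `(A, i)` is adjacent exactly to the elements of `A`, so in `G - H` any pair containing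
it has at most `|A \ H|` common neighbours, fewer than `d` as soon as `H` meets `A`; two remaining
vertices of `U` are adjacent and impose nothing. Conversely, if `H` misses `A`, then `(A, 0)` and
`(A, 1)` are nonadjacent and share all `d` elements of `A` as common neighbours.
-/

def IsCClosed {V : Type*} (G : SimpleGraph V) (c : ℕ) : Prop :=
  ∀ u v : V, u ≠ v → ¬ G.Adj u v → (G.commonNeighbors u v).ncard < c

namespace SimpleGraph

variable {V : Type*} (G : SimpleGraph V)

lemma ncard_commonNeighbors_induce (S : Set V) (x y : S) :
    ((G.induce S).commonNeighbors x y).ncard = (G.commonNeighbors x y ∩ S).ncard := by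
  rw [← Set.ncard_image_of_injective _ Subtype.val_injective]
  congr 1
  ext z
  simp only [Set.mem_image, mem_commonNeighbors, comap_adj, Function.Embedding.subtype_apply,
    Subtype.exists, exists_and_right, exists_eq_right, Set.mem_inter_iff]
  tauto

lemma isCClosed_induce_iff (S : Set V) (c : ℕ) :
    IsCClosed (G.induce S) c ↔
      ∀ x ∈ S, ∀ y ∈ S, x ≠ y → ¬ G.Adj x y →
        (G.commonNeighbors x y ∩ S).ncard < c := by
  simp only [IsCClosed, Subtype.forall, ne_eq, Subtype.mk.injEq, comap_adj,
    Function.Embedding.subtype_apply, ncard_commonNeighbors_induce]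

end SimpleGraph

lemma Set.image_inl_inter_setOf_notMem {U W : Type*} (T : Set U) (H : Finset U) :
    Sum.inl '' T ∩ {x : U ⊕ W | ∀ u, x = Sum.inl u → u ∉ H} = Sum.inl '' (T \ ↑H) := by
  ext x
  simp only [Set.mem_inter_iff, Set.mem_image, Set.mem_ofPred_eq, Set.mem_sdiff, Finset.mem_coe]
  constructor
  · rintro ⟨⟨u, hu, rfl⟩, hH⟩
    exact ⟨u, ⟨hu, hH u rfl⟩, rfl⟩
  · rintro ⟨u, ⟨hu, hH⟩, rfl⟩
    exact ⟨⟨u, hu, rfl⟩, fun v hv => Sum.inl_injective hv ▸ hH⟩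

namespace HittingSetReduction

open SimpleGraph

variable {U : Type*} {𝒜 : Finset (Finset U)}
  {G : SimpleGraph (U ⊕ ({A // A ∈ 𝒜} × Fin 2))}
  (hG : ∀ x y : U ⊕ ({A // A ∈ 𝒜} × Fin 2), G.Adj x y ↔
      ((∃ u v : U, u ≠ v ∧ x = Sum.inl u ∧ y = Sum.inl v) ∨
       (∃ (u : U) (p : {A // A ∈ 𝒜} × Fin 2), u ∈ p.1.1 ∧
         ((x = Sum.inl u ∧ y = Sum.inr p) ∨ (x = Sum.inr p ∧ y = Sum.inl u)))))
include hG

lemma adj_inl_inl {u v : U} (huv : u ≠ v) : G.Adj (Sum.inl u) (Sum.inl v) :=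
  (hG _ _).2 (Or.inl ⟨u, v, huv, rfl, rfl⟩)

lemma neighborSet_inr (p : {A // A ∈ 𝒜} × Fin 2) :
    G.neighborSet (Sum.inr p) = Sum.inl '' (p.1.1 : Set U) := by
  ext x
  rw [mem_neighborSet, hG]
  constructor
  · rintro (⟨u, v, -, hu, -⟩ | ⟨u, q, huq, ⟨hq, rfl⟩ | ⟨hq, rfl⟩⟩)
    · exact Sum.inr_ne_inl hu |>.elim
    · exact Sum.inr_ne_inl hq |>.elim
    · exact ⟨u, Sum.inr_injective hq ▸ huq, rfl⟩
  · rintro ⟨u, hu, rfl⟩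
    exact Or.inr ⟨u, p, hu, Or.inr ⟨rfl, rfl⟩⟩

lemma not_adj_inr_inr (p q : {A // A ∈ 𝒜} × Fin 2) : ¬ G.Adj (Sum.inr p) (Sum.inr q) :=
  fun hadj ↦ by simpa using (neighborSet_inr hG p).le hadj

lemma commonNeighbors_inr_zero_one (A : {A // A ∈ 𝒜}) :
    G.commonNeighbors (Sum.inr (A, 0)) (Sum.inr (A, 1)) = Sum.inl '' (A.1 : Set U) := by
  rw [commonNeighbors_eq, neighborSet_inr hG, neighborSet_inr hG, Set.inter_self]

lemma ncard_commonNeighbors_inr_inter_lt (H : Finset U) (p : {A // A ∈ 𝒜} × Fin 2)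
    (hit : ∃ u ∈ p.1.1, u ∈ H) (z : U ⊕ ({A // A ∈ 𝒜} × Fin 2)) :
    (G.commonNeighbors (Sum.inr p) z ∩ {x | ∀ u : U, x = Sum.inl u → u ∉ H}).ncard
      < p.1.1.card := by
  obtain ⟨u, huA, huH⟩ := hit
  have hsub : G.commonNeighbors (Sum.inr p) z ∩ {x | ∀ u : U, x = Sum.inl u → u ∉ H} ⊆
      Sum.inl '' ((p.1.1 : Set U) \ H) := by
    rw [← Set.image_inl_inter_setOf_notMem, ← neighborSet_inr hG]
    exact Set.inter_subset_inter_left _ (commonNeighbors_subset_neighborSet_left _ _ _)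
  calc _ ≤ (Sum.inl '' ((p.1.1 : Set U) \ H)).ncard := Set.ncard_le_ncard hsub
    _ = ((p.1.1 : Set U) \ H).ncard := Set.ncard_image_of_injective _ Sum.inl_injective
    _ < (p.1.1 : Set U).ncard :=
      Set.ncard_lt_ncard (Set.sdiff_ssubset_left_iff.2 ⟨u, huA, huH⟩)
    _ = p.1.1.card := Set.ncard_coe_finset _

end HittingSetReduction

open SimpleGraph HittingSetReduction in
theorem hittingSet_iff_dClosed_general {U : Type*}
    (𝒜 : Finset (Finset U)) (d : ℕ)
    (hsize : ∀ A ∈ 𝒜, A.card = d)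
    (G : SimpleGraph (U ⊕ ({A // A ∈ 𝒜} × Fin 2)))
    (hG : ∀ x y : U ⊕ ({A // A ∈ 𝒜} × Fin 2), G.Adj x y ↔
      ((∃ u v : U, u ≠ v ∧ x = Sum.inl u ∧ y = Sum.inl v) ∨
       (∃ (u : U) (p : {A // A ∈ 𝒜} × Fin 2), u ∈ p.1.1 ∧
         ((x = Sum.inl u ∧ y = Sum.inr p) ∨ (x = Sum.inr p ∧ y = Sum.inl u)))))
    (H : Finset U) :
    (∀ A ∈ 𝒜, ∃ u ∈ A, u ∈ H) ↔
      IsCClosed (G.induce {x : U ⊕ ({A // A ∈ 𝒜} × Fin 2) |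
        ∀ u : U, x = Sum.inl u → u ∉ H}) d := by
  rw [isCClosed_induce_iff]
  constructor
  · intro hit x _ y _ hxy hnadj
    have hlt (p : {A // A ∈ 𝒜} × Fin 2) (z) := hsize _ p.1.2 ▸
      ncard_commonNeighbors_inr_inter_lt hG H p (hit _ p.1.2) z
    rcases x with u | p
    · rcases y with v | q
      · exact absurd (adj_inl_inl hG fun h ↦ hxy (congrArg Sum.inl h)) hnadj
      · rw [commonNeighbors_symm]
        exact hlt q _
    · exact hlt p y
  · intro hclosed A hA
    by_contra! hmiss
    have hcn := hclosed (Sum.inr (⟨A, hA⟩, 0)) (by simp) (Sum.inr (⟨A, hA⟩, 1)) (by simp)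
      (by simp) (not_adj_inr_inr hG _ _)
    rw [commonNeighbors_inr_zero_one hG, Set.image_inl_inter_setOf_notMem,
      sdiff_eq_left.2 (Set.disjoint_left.2 hmiss),
      Set.ncard_image_of_injective _ Sum.inl_injective, Set.ncard_coe_finset, hsize A hA] at hcn
    exact hcn.false

/-- Correctness of the reduction from `d`-Hitting Set: in the graph `G` built from an
instance `(U, 𝒜)` with all sets of size exactly `d` — `U` is a clique, and for each
`A ∈ 𝒜` the two new vertices `v_A = (A, 0)` and `u_A = (A, 1)` are adjacent exactly
to the elements of `A` — a set `H ⊆ U` is a hitting set for `𝒜` if and only if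
deleting `H` from `G` yields a `d`-closed graph. -/
theorem hittingSet_iff_dClosed {U : Type*} [Fintype U] [DecidableEq U]
    (𝒜 : Finset (Finset U)) (d : ℕ) (hd : 1 ≤ d)
    (hsize : ∀ A ∈ 𝒜, A.card = d)
    (G : SimpleGraph (U ⊕ ({A // A ∈ 𝒜} × Fin 2)))
    (hG : ∀ x y : U ⊕ ({A // A ∈ 𝒜} × Fin 2), G.Adj x y ↔
      ((∃ u v : U, u ≠ v ∧ x = Sum.inl u ∧ y = Sum.inl v) ∨
       (∃ (u : U) (p : {A // A ∈ 𝒜} × Fin 2), u ∈ p.1.1 ∧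
         ((x = Sum.inl u ∧ y = Sum.inr p) ∨ (x = Sum.inr p ∧ y = Sum.inl u)))))
    (H : Finset U) :
    (∀ A ∈ 𝒜, ∃ u ∈ A, u ∈ H) ↔
      IsCClosed (G.induce {x : U ⊕ ({A // A ∈ 𝒜} × Fin 2) |
        ∀ u : U, x = Sum.inl u → u ∉ H}) d :=
  hittingSet_iff_dClosed_general 𝒜 d hsize G hG H
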